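/- arXiv:2104.09595 — 3 statements merged into one kernel-verified Lean document; each statement's English description precedes it below -/
import Mathlib

section
/- Let (Σ, 𝒜) be a measurable space, μ a probability measure on Σ, Φ ⊆ Σ a measurable set with μ(Φ) = 1, and g : Σ → Σ a measurable map. Let ε ∈ (0,1) and β ∈ (0,1), and let N ∈ ℕ satisfy N ≥ ln(β)/ln(1−ε). If μ({σ : g(σ) ∉ Φ}) > ε (i.e., Φ is not ε-almost forward invariant for g), then the product measure ⨂_{i ∈ Fin N} μ of the event {x : (Fin N → Σ) | ∀ i, g(x i) ∈ Φ} is at most β. Consequently, if all N independent sampled scenarios pass the invariance check, then with confidence at least 1−β the set Φ is ε-almost forward invariant for g. -/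
open MeasureTheory
open scoped ENNReal

/-! A failing map sends a sample into `Φ` with probability at most `1 - ε`, so by independence
all `N` samples pass with probability at most `(1 - ε) ^ N`; since `log (1 - ε) < 0`, the bound
`N ≥ log β / log (1 - ε)` is exactly `(1 - ε) ^ N ≤ β`. -/

theorem pow_le_of_log_div_log_le {a b : ℝ} {n : ℕ} (ha₀ : 0 < a) (ha₁ : a < 1) (hb : 0 < b)
    (hn : Real.log b / Real.log a ≤ n) : a ^ n ≤ b := by
  rwa [Real.log_div_log, Real.logb_le_iff_le_rpow_of_base_lt_one ha₀ ha₁ hb,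
    Real.rpow_natCast] at hn

theorem MeasureTheory.Measure.pi_univ_pi_const {ι α : Type*} [Fintype ι] [MeasurableSpace α]
    (μ : Measure α) [SigmaFinite μ] (s : Set α) :
    Measure.pi (fun _ : ι => μ) (Set.univ.pi fun _ => s) = μ s ^ Fintype.card ι := by
  rw [Measure.pi_pi, Finset.prod_const, Finset.card_univ]

theorem MeasureTheory.measure_pi_forall_mem_le_one_sub_pow {α : Type*} [MeasurableSpace α]
    (μ : Measure α) [IsProbabilityMeasure μ] {s : Set α} (hs : MeasurableSet s) {p : ℝ≥0∞}
    (hp : p ≤ μ sᶜ) (n : ℕ) :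
    Measure.pi (fun _ : Fin n => μ) {x | ∀ i, x i ∈ s} ≤ (1 - p) ^ n := by
  have hμs : μ s ≤ 1 - p := compl_compl s ▸ prob_compl_le_one_sub_of_le_prob hp hs.compl
  calc Measure.pi (fun _ : Fin n => μ) {x | ∀ i, x i ∈ s}
      = Measure.pi (fun _ : Fin n => μ) (Set.univ.pi fun _ => s) := by simp [Set.pi]
    _ = μ s ^ n := by rw [Measure.pi_univ_pi_const, Fintype.card_fin]
    _ ≤ (1 - p) ^ n := by gcongr

theorem stmt_2_general {St : Type*} [MeasurableSpace St] (μ : Measure St)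
    [IsProbabilityMeasure μ] (Φ : Set St) (hΦ : MeasurableSet Φ)
    (g : St → St) (hg : Measurable g) (ε β : ℝ) (hε : ε ∈ Set.Ioo (0 : ℝ) 1)
    (hβ : β ∈ Set.Ioo (0 : ℝ) 1) (N : ℕ)
    (hN : (N : ℝ) ≥ Real.log β / Real.log (1 - ε))
    (hfail : μ {σ | g σ ∉ Φ} > ENNReal.ofReal ε) :
    (Measure.pi fun _ : Fin N => μ) {x : Fin N → St | ∀ i, g (x i) ∈ Φ} ≤ ENNReal.ofReal β := by
  obtain ⟨hε₀, hε₁⟩ := hε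
  have hpow : (1 - ε) ^ N ≤ β :=
    pow_le_of_log_div_log_le (by linarith) (by linarith) hβ.1 hN
  calc (Measure.pi fun _ : Fin N => μ) {x | ∀ i, x i ∈ g ⁻¹' Φ}
      ≤ (1 - ENNReal.ofReal ε) ^ N :=
        measure_pi_forall_mem_le_one_sub_pow μ (hg hΦ) hfail.le N
    _ = ENNReal.ofReal ((1 - ε) ^ N) := by
        rw [ENNReal.ofReal_pow (by linarith), ENNReal.ofReal_sub _ hε₀.le, ENNReal.ofReal_one]
    _ ≤ ENNReal.ofReal β := ENNReal.ofReal_le_ofReal hpow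

theorem stmt_2 {St : Type*} [MeasurableSpace St] (μ : Measure St)
    [IsProbabilityMeasure μ] (Φ : Set St) (hΦ : MeasurableSet Φ) (hμΦ : μ Φ = 1)
    (g : St → St) (hg : Measurable g) (ε β : ℝ) (hε : ε ∈ Set.Ioo (0 : ℝ) 1)
    (hβ : β ∈ Set.Ioo (0 : ℝ) 1) (N : ℕ)
    (hN : (N : ℝ) ≥ Real.log β / Real.log (1 - ε))
    (hfail : μ {σ | g σ ∉ Φ} > ENNReal.ofReal ε) :
    (Measure.pi fun _ : Fin N => μ) {x : Fin N → St | ∀ i, g (x i) ∈ Φ} ≤ ENNReal.ofReal β :=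
  stmt_2_general μ Φ hΦ g hg ε β hε hβ N hN hfail
end

section
/- Let E be a real normed vector space, let Φ ⊆ E, let Γ ⊆ U and W be nonempty sets, and let f : E → U → W → E. Suppose there is σ̄ ≥ 0 such that ‖f(σ, u, ω) − σ‖ ≤ σ̄ for all σ ∈ Φ, u ∈ Γ, ω ∈ W (uniformly bounded one-step displacement). Define the σ̄-boundary set Φ^σ̄ = {σ ∈ Φ : the infimum distance from σ to the frontier of Φ is at most σ̄} (equivalently, {σ ∈ Φ : 0 ≥ d_s(σ, ∂Φ) ≥ −σ̄}). Then f(σ, u, ω) ∈ Φ for all σ ∈ Φ, u ∈ Γ, ω ∈ W if and only if f(σ, u, ω) ∈ Φ for all σ ∈ Φ^σ̄, u ∈ Γ, ω ∈ W. In particular, Φ is robustly controlled forward invariant with respect to Γ if and only if the one-step condition holds on the σ̄-boundary set alone. -/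
/-!
If a step leaves `Φ` from `σ ∈ Φ`, the segment from `σ` to `f σ u ω` is connected, meets both `Φ`
and its complement, and so crosses the frontier of `Φ`; hence the frontier lies within the step
length `‖f σ u ω - σ‖ ≤ σbar` of `σ`. So only points of the `σbar`-boundary set can leave `Φ`.
-/

open Set Metric

theorem IsPreconnected.inter_frontier_nonempty {X : Type*} [TopologicalSpace X] {s t : Set X}
    (ht : IsPreconnected t) (hin : (t ∩ s).Nonempty) (hout : (t \ s).Nonempty) :
    (t ∩ frontier s).Nonempty := by
  by_contra hfr
  have hcover : t ⊆ interior s ∪ interior sᶜ := by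
    intro z hz
    rw [interior_compl]
    by_contra hz'
    simp only [mem_union, mem_compl_iff, not_or, not_not] at hz'
    exact hfr ⟨z, hz, hz'.2, hz'.1⟩
  obtain ⟨x, hxt, hxs⟩ := hin
  obtain ⟨y, hyt, hys⟩ := hout
  have hx : x ∈ interior s :=
    (hcover hxt).resolve_right fun h => interior_subset h hxs
  have hy : y ∈ interior sᶜ :=
    (hcover hyt).resolve_left fun h => hys (interior_subset h)
  obtain ⟨z, -, hzs, hzc⟩ := ht _ _ isOpen_interior isOpen_interior hcover ⟨x, hxt, hx⟩ ⟨y, hyt, hy⟩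
  exact interior_subset hzc (interior_subset hzs)

theorem infDist_frontier_le_dist_of_mem_of_notMem {E : Type*} [NormedAddCommGroup E]
    [NormedSpace ℝ E] {s : Set E} {x y : E} (hx : x ∈ s) (hy : y ∉ s) :
    infDist x (frontier s) ≤ dist x y := by
  obtain ⟨z, hzseg, hzfr⟩ := (convex_segment x y).isPreconnected.inter_frontier_nonempty
    ⟨x, left_mem_segment ℝ x y, hx⟩ ⟨y, right_mem_segment ℝ x y, hy⟩
  calc infDist x (frontier s) ≤ dist x z := infDist_le_dist_of_mem hzfr
    _ ≤ dist x y := by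
      rw [← dist_add_dist_of_mem_segment hzseg]
      exact le_add_of_nonneg_right dist_nonneg

theorem stmt_7_general {E U W : Type*} [NormedAddCommGroup E] [NormedSpace ℝ E]
    (Φ : Set E) (Γ : Set U) (W' : Set W)
    (f : E → U → W → E) (σbar : ℝ)
    (hbound : ∀ σ ∈ Φ, ∀ u ∈ Γ, ∀ ω ∈ W', ‖f σ u ω - σ‖ ≤ σbar) :
    (∀ σ ∈ Φ, ∀ u ∈ Γ, ∀ ω ∈ W', f σ u ω ∈ Φ) ↔
      (∀ σ ∈ {σ ∈ Φ | Metric.infDist σ (frontier Φ) ≤ σbar},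
        ∀ u ∈ Γ, ∀ ω ∈ W', f σ u ω ∈ Φ) := by
  refine ⟨fun h σ hσ => h σ hσ.1, fun h σ hσ u hu ω hω => ?_⟩
  by_contra hf
  have hnear : infDist σ (frontier Φ) ≤ σbar :=
    calc infDist σ (frontier Φ) ≤ dist σ (f σ u ω) :=
          infDist_frontier_le_dist_of_mem_of_notMem hσ hf
      _ ≤ σbar := by rw [dist_comm, dist_eq_norm]; exact hbound σ hσ u hu ω hω
  exact hf (h σ ⟨hσ, hnear⟩ u hu ω hω)

theorem stmt_7 {E U W : Type*} [NormedAddCommGroup E] [NormedSpace ℝ E]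
    (Φ : Set E) (Γ : Set U) (W' : Set W) (hΓ : Γ.Nonempty) (hW : W'.Nonempty)
    (f : E → U → W → E) (σbar : ℝ) (hσbar : 0 ≤ σbar)
    (hbound : ∀ σ ∈ Φ, ∀ u ∈ Γ, ∀ ω ∈ W', ‖f σ u ω - σ‖ ≤ σbar) :
    (∀ σ ∈ Φ, ∀ u ∈ Γ, ∀ ω ∈ W', f σ u ω ∈ Φ) ↔
      (∀ σ ∈ {σ ∈ Φ | Metric.infDist σ (frontier Φ) ≤ σbar},
        ∀ u ∈ Γ, ∀ ω ∈ W', f σ u ω ∈ Φ) :=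
  stmt_7_general Φ Γ W' f σbar hbound
end

section
/- Let E be a metric space, let Φ ⊆ E be a closed set with nonempty frontier, let U and W be types, let Γ ⊆ U and W' ⊆ W be nonempty sets, and let f : E → U → W → E. For σ ∈ Φ and u ∈ Γ, write h(σ, u) = sup_{ω ∈ W'} d_s(f(σ, u, ω), Φ) for the worst-case signed distance of the successor state to the boundary of Φ, and assume for each σ ∈ Φ and u ∈ Γ that the set {d_s(f(σ, u, ω), Φ) : ω ∈ W'} is bounded above. Suppose that for every σ ∈ Φ there exists an adversarial action u* ∈ Γ satisfying h(σ, u) ≤ h(σ, u*) for all u ∈ Γ, and such that f(σ, u*, ω) ∈ Φ for all ω ∈ W'. Then f(σ, u, ω) ∈ Φ for every σ ∈ Φ, u ∈ Γ, and ω ∈ W'; consequently Φ is robustly controlled forward invariant with respect to the full admissible action set Γ. -/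
open Classical in
/-- Signed point-to-set distance: the distance to the frontier of `Φ`,
negated when the point belongs to `Φ`. -/
noncomputable def signedPtSetDist {X : Type*} [MetricSpace X] (x : X) (Φ : Set X) : ℝ :=
  if x ∈ Φ then -(Metric.infDist x (frontier Φ)) else Metric.infDist x (frontier Φ)

/-! Safety of the adversarial action forces its worst-case signed distance to be `≤ 0`; every
other admissible action has a smaller worst case, so each of its successors has signed
distance `≤ 0` too, and for a closed set with nonempty frontier that means lying in the set. -/

section SignedPtSetDist

variable {X : Type*} [MetricSpace X] {x : X} {Φ : Set X}

theorem signedPtSetDist_nonpos_of_mem (hx : x ∈ Φ) : signedPtSetDist x Φ ≤ 0 := by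
  simp only [signedPtSetDist, if_pos hx, neg_nonpos]
  exact Metric.infDist_nonneg

theorem mem_of_signedPtSetDist_nonpos (hclosed : IsClosed Φ) (hfr : (frontier Φ).Nonempty)
    (h : signedPtSetDist x Φ ≤ 0) : x ∈ Φ := by
  by_contra hx
  rw [signedPtSetDist, if_neg hx] at h
  have hzero : Metric.infDist x (frontier Φ) = 0 := le_antisymm h Metric.infDist_nonneg
  have hfrontier : x ∈ frontier Φ := by
    rw [← isClosed_frontier.closure_eq, Metric.mem_closure_iff_infDist_zero hfr]
    exact hzero
  exact hx (hclosed.frontier_subset hfrontier)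

theorem signedPtSetDist_nonpos_iff (hclosed : IsClosed Φ) (hfr : (frontier Φ).Nonempty) :
    signedPtSetDist x Φ ≤ 0 ↔ x ∈ Φ :=
  ⟨mem_of_signedPtSetDist_nonpos hclosed hfr, signedPtSetDist_nonpos_of_mem⟩

end SignedPtSetDist

theorem stmt_10_general {E U W : Type*} [MetricSpace E]
    (Φ : Set E) (hclosed : IsClosed Φ) (hfr : (frontier Φ).Nonempty)
    (Γ : Set U) (W' : Set W)
    (f : E → U → W → E)
    (hbdd : ∀ σ ∈ Φ, ∀ u ∈ Γ, BddAbove ((fun ω => signedPtSetDist (f σ u ω) Φ) '' W'))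
    (hadv : ∀ σ ∈ Φ, ∃ ustar ∈ Γ,
      (∀ u ∈ Γ, sSup ((fun ω => signedPtSetDist (f σ u ω) Φ) '' W') ≤
        sSup ((fun ω => signedPtSetDist (f σ ustar ω) Φ) '' W')) ∧
      ∀ ω ∈ W', f σ ustar ω ∈ Φ) :
    ∀ σ ∈ Φ, ∀ u ∈ Γ, ∀ ω ∈ W', f σ u ω ∈ Φ := by
  intro σ hσ u hu ω hω
  obtain ⟨ustar, -, hworst, hsafe⟩ := hadv σ hσ
  have hworst_nonpos : sSup ((fun ω => signedPtSetDist (f σ ustar ω) Φ) '' W') ≤ 0 :=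
    Real.sSup_nonpos <| by
      rintro _ ⟨ω', hω', rfl⟩
      exact signedPtSetDist_nonpos_of_mem (hsafe ω' hω')
  rw [← signedPtSetDist_nonpos_iff hclosed hfr]
  calc signedPtSetDist (f σ u ω) Φ
      ≤ sSup ((fun ω => signedPtSetDist (f σ u ω) Φ) '' W') :=
        le_csSup (hbdd σ hσ u hu) ⟨ω, hω, rfl⟩
    _ ≤ sSup ((fun ω => signedPtSetDist (f σ ustar ω) Φ) '' W') := hworst u hu
    _ ≤ 0 := hworst_nonpos

theorem stmt_10 {E U W : Type*} [MetricSpace E]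
    (Φ : Set E) (hclosed : IsClosed Φ) (hfr : (frontier Φ).Nonempty)
    (Γ : Set U) (W' : Set W) (hΓ : Γ.Nonempty) (hW : W'.Nonempty)
    (f : E → U → W → E)
    (hbdd : ∀ σ ∈ Φ, ∀ u ∈ Γ, BddAbove ((fun ω => signedPtSetDist (f σ u ω) Φ) '' W'))
    (hadv : ∀ σ ∈ Φ, ∃ ustar ∈ Γ,
      (∀ u ∈ Γ, sSup ((fun ω => signedPtSetDist (f σ u ω) Φ) '' W') ≤
        sSup ((fun ω => signedPtSetDist (f σ ustar ω) Φ) '' W')) ∧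
      ∀ ω ∈ W', f σ ustar ω ∈ Φ) :
    ∀ σ ∈ Φ, ∀ u ∈ Γ, ∀ ω ∈ W', f σ u ω ∈ Φ :=
  stmt_10_general Φ hclosed hfr Γ W' f hbdd hadv
end
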